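/- Let p be a prime, let S be a cyclic p-gonal Riemann surface of genus g ≥ 2 whose p-gonal group ⟨φ⟩ is the unique p-gonal group of S, and let C be an irreducible algebraic curve model of S defined over a subfield K ⊆ ℂ, on which φ is given by a rational map with coefficients in the algebraic closure K̄ of K in ℂ. Then φ is defined over an extension K₁ of K with [K₁ : K] ≤ p−1; namely, the subgroup A = {σ ∈ Gal(K̄/K) : φ^σ = φ} has index at most p−1 in Gal(K̄/K), since for every σ ∈ Gal(K̄/K) the conjugate φ^σ lies in {φ, φ^2, …, φ^{p−1}}, and φ is defined over the fixed field K₁ of A. -/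

import Mathlib

/-!
We model a smooth projective curve over an algebraically closed field `F` by its function
field: a field with an `F`-algebra structure.  Automorphisms of the curve correspond to
`F`-algebra automorphisms of the function field, and the quotient by a finite automorphism
group has genus zero iff the corresponding fixed field is a rational function field.
-/

open Polynomial IntermediateField Subgroup

noncomputable section

/-- The polynomial `F(x) = ∏ (x - a j)^(n j)`. -/
def gonalPoly {F : Type} [Field F] {m : ℕ} (a : Fin m → F) (n : Fin m → ℕ) : Polynomial F :=
  ∏ j, (Polynomial.X - Polynomial.C (a j)) ^ (n j)

/-- The defining polynomial `y^p - ∏ (x - a j)^(n j)` of the affine `p`-gonal curve,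
with `x = X 0` and `y = X 1`. -/
def gonalCurve (p : ℕ) {F : Type} [Field F] {m : ℕ} (a : Fin m → F) (n : Fin m → ℕ) :
    MvPolynomial (Fin 2) F :=
  MvPolynomial.X 1 ^ p - Polynomial.eval₂ MvPolynomial.C (MvPolynomial.X 0) (gonalPoly a n)

/-- Coordinate ring of the affine curve `y^p = ∏ (x - a j)^(n j)`. -/
abbrev gonalRing (p : ℕ) {F : Type} [Field F] {m : ℕ} (a : Fin m → F) (n : Fin m → ℕ) :=
  MvPolynomial (Fin 2) F ⧸ Ideal.span {gonalCurve p a n}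

/-- Function field of the affine curve `y^p = ∏ (x - a j)^(n j)`. -/
abbrev gonalFF (p : ℕ) {F : Type} [Field F] {m : ℕ} (a : Fin m → F) (n : Fin m → ℕ) :=
  FractionRing (gonalRing p a n)

/-- The coordinate function `x` in the function field. -/
def xFn (p : ℕ) {F : Type} [Field F] {m : ℕ} (a : Fin m → F) (n : Fin m → ℕ) :
    gonalFF p a n :=
  algebraMap (gonalRing p a n) (gonalFF p a n) (Ideal.Quotient.mk _ (MvPolynomial.X 0))

/-- The coordinate function `y` in the function field. -/
def yFn (p : ℕ) {F : Type} [Field F] {m : ℕ} (a : Fin m → F) (n : Fin m → ℕ) :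
    gonalFF p a n :=
  algebraMap (gonalRing p a n) (gonalFF p a n) (Ideal.Quotient.mk _ (MvPolynomial.X 1))

/-- The branch data of a `p`-gonal curve: distinct branch values `a j` with local exponents
`n j ∈ {1, …, p-1}` satisfying `n 1 + ⋯ + n m ≡ 0 (mod p)`. -/
def GonalData (p : ℕ) {F : Type} [Field F] {m : ℕ} (a : Fin m → F) (n : Fin m → ℕ) : Prop :=
  Function.Injective a ∧ (∀ j, 1 ≤ n j ∧ n j ≤ p - 1) ∧ p ∣ ∑ j, n j

/-!
For `σ ∈ Gal(K̄/K)`, conjugating `φ` by the `σ`-semilinear automorphism `ρ σ` gives a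
`K̄`-automorphism `φ^σ` of the same order whose fixed field is again rational: twist the
isomorphism with `K̄(X)` by `σ` on coefficients. Uniqueness of the `p`-gonal group forces
`φ^σ = φ^k` with `1 ≤ k ≤ p - 1`. So `σ ↦ φ^σ` takes at most `p - 1` values and is constant
exactly on the cosets of `A`, whence `[Gal(K̄/K) : A] ≤ p - 1`. As `K̄/K` is Galois, the degree
of the fixed field of `A` is the index of its fixing group, which contains `A`.
-/

lemma IsOfFinOrder.exists_pow_eq_of_mem_zpowers {G : Type*} [Group G] {x y : G}
    (hx : IsOfFinOrder x) (hy : y ∈ zpowers x) (hy₁ : y ≠ 1) :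
    ∃ k, 1 ≤ k ∧ k ≤ orderOf x - 1 ∧ x ^ k = y := by
  classical
  obtain ⟨k, hk, rfl⟩ := Finset.mem_image.mp (hx.mem_zpowers_iff_mem_range_orderOf.mp hy)
  have hk₀ : k ≠ 0 := by rintro rfl; exact hy₁ (pow_zero x)
  exact ⟨k, by omega, by have := Finset.mem_range.mp hk; omega, rfl⟩

lemma Subgroup.index_comap_centralizer_le {G H : Type*} [Group G] [Group H] (f : G →* H)
    (h : H) {T : Set H} (hT : T.Finite) (hfT : ∀ g, f g * h * (f g)⁻¹ ∈ T) :
    ((centralizer {h}).comap f).FiniteIndex ∧ ((centralizer {h}).comap f).index ≤ T.ncard := by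
  let _ : MulAction G H :=
    MulAction.compHom H ((ConjAct.toConjAct : H ≃* ConjAct H).toMonoidHom.comp f)
  have hstab : MulAction.stabilizer G h = (centralizer {h}).comap f := by
    ext g
    simp [MulAction.mem_stabilizer_iff, mem_centralizer_singleton_iff, MulAction.compHom_smul_def,
      ConjAct.smul_def, mul_inv_eq_iff_eq_mul]
  have horbit : MulAction.orbit G h ⊆ T := by
    rintro _ ⟨g, rfl⟩
    exact hfT g
  rw [← hstab, finiteIndex_iff, MulAction.index_stabilizer]
  exact ⟨(Set.ncard_pos (hT.subset horbit)).mpr ⟨h, MulAction.mem_orbit_self h⟩ |>.ne',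
    Set.ncard_le_ncard horbit hT⟩

section FixedField

variable {F E : Type*} [Field F] [Field E] [Algebra F E] (A : Subgroup Gal(E/F))

lemma IntermediateField.le_fixingSubgroup_fixedField : A ≤ fixingSubgroup (fixedField A) :=
  (le_iff_le _ _).mp le_rfl

lemma IntermediateField.mem_fixedField_zpowers_iff (φ : E ≃ₐ[F] E) (x : E) :
    x ∈ fixedField (zpowers φ) ↔ φ x = x :=
  ⟨fun h ↦ h ⟨φ, mem_zpowers φ⟩,
    fun h ψ ↦ (zpowers_le.mpr h : zpowers φ ≤ MulAction.stabilizer (E ≃ₐ[F] E) x) ψ.2⟩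

variable [IsGalois F E] [A.FiniteIndex]

theorem IntermediateField.finiteDimensional_fixedField_of_finiteIndex :
    FiniteDimensional F (fixedField A) := by
  have := finiteIndex_of_le (le_fixingSubgroup_fixedField A)
  refine Module.finite_of_finrank_pos ?_
  rw [finrank_eq_fixingSubgroup_index]
  exact Nat.pos_of_ne_zero FiniteIndex.index_ne_zero

theorem IntermediateField.finrank_fixedField_le_index :
    Module.finrank F (fixedField A) ≤ A.index := by
  rw [finrank_eq_fixingSubgroup_index]
  exact index_antitone (le_fixingSubgroup_fixedField A)

end FixedField

def RatFunc.mapCoeffs {F : Type*} [Field F] (σ : F ≃+* F) : RatFunc F ≃+* RatFunc F :=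
  IsFractionRing.ringEquivOfRingEquiv (Polynomial.mapEquiv σ)

lemma RatFunc.mapCoeffs_algebraMap {F : Type*} [Field F] (σ : F ≃+* F) (c : F) :
    RatFunc.mapCoeffs σ (algebraMap F (RatFunc F) c) = algebraMap F (RatFunc F) (σ c) := by
  rw [IsScalarTower.algebraMap_apply F F[X] (RatFunc F), RatFunc.mapCoeffs,
    IsFractionRing.ringEquivOfRingEquiv_algebraMap, IsScalarTower.algebraMap_apply F F[X]]
  simp

section Semilinear

variable {F E E' : Type*} [Field F] [Field E] [Field E'] [Algebra F E] [Algebra F E']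
  {σ : F ≃+* F} {u : E ≃+* E'}

lemma symm_algebraMap_of_semilinear (hu : ∀ c, u (algebraMap F E c) = algebraMap F E' (σ c))
    (c : F) : u.symm (algebraMap F E' c) = algebraMap F E (σ.symm c) := by
  rw [u.symm_apply_eq, hu, σ.apply_symm_apply]

lemma nonempty_algEquiv_ratFunc_of_semilinear
    (hu : ∀ c, u (algebraMap F E c) = algebraMap F E' (σ c))
    (h : Nonempty (E ≃ₐ[F] RatFunc F)) : Nonempty (E' ≃ₐ[F] RatFunc F) := by
  obtain ⟨r⟩ := h
  refine ⟨AlgEquiv.ofRingEquiv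
    (f := (u.symm.trans r.toRingEquiv).trans (RatFunc.mapCoeffs σ)) fun c ↦ ?_⟩
  simp only [RingEquiv.trans_apply, symm_algebraMap_of_semilinear hu, AlgEquiv.coe_ringEquiv,
    AlgEquiv.commutes, RatFunc.mapCoeffs_algebraMap, RingEquiv.apply_symm_apply]

end Semilinear

section ConjSemilinear

variable {F S : Type*} [Field F] [Field S] [Algebra F S] {σ : F ≃+* F} {u : S ≃+* S}
  (hu : ∀ c, u (algebraMap F S c) = algebraMap F S (σ c))
include hu

/-- The paper's `φ^σ` when `u` applies `σ` to the coefficients of rational functions. -/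
def conjSemilinear : (S ≃ₐ[F] S) →* (S ≃ₐ[F] S) where
  toFun φ := AlgEquiv.ofRingEquiv (f := u.symm.trans (φ.toRingEquiv.trans u)) fun c ↦ by
    simp only [RingEquiv.trans_apply, symm_algebraMap_of_semilinear hu, AlgEquiv.coe_ringEquiv,
      AlgEquiv.commutes, hu, RingEquiv.apply_symm_apply]
  map_one' := by ext; simp
  map_mul' _ _ := by ext; simp

lemma conjSemilinear_apply (φ : S ≃ₐ[F] S) (s : S) :
    conjSemilinear hu φ s = u (φ (u.symm s)) :=
  rfl

lemma conjSemilinear_injective : Function.Injective (conjSemilinear hu) := fun φ ψ h ↦ by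
  ext s
  simpa [conjSemilinear_apply] using DFunLike.congr_fun h (u s)

lemma orderOf_conjSemilinear (φ : S ≃ₐ[F] S) : orderOf (conjSemilinear hu φ) = orderOf φ :=
  orderOf_injective _ (conjSemilinear_injective hu) φ

lemma apply_mem_fixedField_zpowers_conjSemilinear_iff (φ : S ≃ₐ[F] S) (x : S) :
    u x ∈ fixedField (zpowers (conjSemilinear hu φ)) ↔ x ∈ fixedField (zpowers φ) := by
  rw [mem_fixedField_zpowers_iff, mem_fixedField_zpowers_iff, conjSemilinear_apply,
    u.symm_apply_apply, u.injective.eq_iff]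

lemma nonempty_fixedField_conjSemilinear_algEquiv_ratFunc (φ : S ≃ₐ[F] S)
    (h : Nonempty (fixedField (zpowers φ) ≃ₐ[F] RatFunc F)) :
    Nonempty (fixedField (zpowers (conjSemilinear hu φ)) ≃ₐ[F] RatFunc F) := by
  let v : fixedField (zpowers φ) ≃+* fixedField (zpowers (conjSemilinear hu φ)) :=
    { (u : S ≃ S).subtypeEquiv fun x ↦
        (apply_mem_fixedField_zpowers_conjSemilinear_iff hu φ x).symm with
      map_mul' := fun x y ↦ Subtype.ext (map_mul u (x : S) y)
      map_add' := fun x y ↦ Subtype.ext (map_add u (x : S) y) }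
  exact nonempty_algEquiv_ratFunc_of_semilinear (u := v) (fun c ↦ Subtype.ext (hu c)) h

end ConjSemilinear


lemma exists_pow_eq_conjSemilinear {F S : Type*} [Field F] [Field S] [Algebra F S]
    {σ : F ≃+* F} {u : S ≃+* S} (hu : ∀ c, u (algebraMap F S c) = algebraMap F S (σ c))
    {p : ℕ} (hp : p.Prime) (φ : S ≃ₐ[F] S) (hord : orderOf φ = p)
    (hgonal : Nonempty (fixedField (zpowers φ) ≃ₐ[F] RatFunc F))
    (hunique : ∀ ψ : S ≃ₐ[F] S, orderOf ψ = p →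
      Nonempty (fixedField (zpowers ψ) ≃ₐ[F] RatFunc F) → zpowers ψ = zpowers φ) :
    ∃ k, 1 ≤ k ∧ k ≤ p - 1 ∧ φ ^ k = conjSemilinear hu φ := by
  set ψ := conjSemilinear hu φ
  have hψord : orderOf ψ = p := (orderOf_conjSemilinear hu φ).trans hord
  have hψ : ψ ∈ zpowers φ :=
    hunique ψ hψord (nonempty_fixedField_conjSemilinear_algEquiv_ratFunc hu φ hgonal) ▸
      mem_zpowers ψ
  have hψ₁ : ψ ≠ 1 := fun h ↦ hp.one_lt.ne (by rw [← hψord, h, orderOf_one])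
  have hφ : IsOfFinOrder φ := orderOf_pos_iff.mp (hord ▸ hp.pos)
  exact hord ▸ hφ.exists_pow_eq_of_mem_zpowers hψ hψ₁

/-- `ρ σ` applies `σ` to the coefficients of rational functions on the model of `S` over `K`, so
`φ^σ = ρ σ ∘ φ ∘ (ρ σ)⁻¹`, and `φ` is defined over `L ⊆ K̄` iff `φ^σ = φ` for all `σ` fixing
`L`. -/
theorem pGonal_automorphism_defined_over_small_extension_general
    (p : ℕ) (hp : p.Prime)
    (K : Type) [Field K] [Algebra K ℂ]
    (Kbar : Type) [Field Kbar] [Algebra K Kbar] [IsAlgClosure K Kbar]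
    (S : Type) [Field S] [Algebra Kbar S]
    (φ : S ≃ₐ[Kbar] S)
    (hord : orderOf φ = p)
    (hgonal : Nonempty ((IntermediateField.fixedField (Subgroup.zpowers φ)) ≃ₐ[Kbar]
      RatFunc Kbar))
    -- `⟨φ⟩` is the unique `p`-gonal group of `S`
    (hunique : ∀ ψ : S ≃ₐ[Kbar] S, orderOf ψ = p →
      Nonempty ((IntermediateField.fixedField (Subgroup.zpowers ψ)) ≃ₐ[Kbar] RatFunc Kbar) →
      Subgroup.zpowers ψ = Subgroup.zpowers φ)
    -- the canonical semilinear action of `Gal(K̄/K)` on `S` coming from the model of `S`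
    -- over `K`
    (ρ : (Kbar ≃ₐ[K] Kbar) →* (S ≃+* S))
    (hsemi : ∀ (σ : Kbar ≃ₐ[K] Kbar) (c : Kbar),
      ρ σ (algebraMap Kbar S c) = algebraMap Kbar S (σ c)) :
    ∃ A : Subgroup (Kbar ≃ₐ[K] Kbar),
      (∀ σ, σ ∈ A ↔ ∀ s : S, ρ σ (φ s) = φ (ρ σ s)) ∧
      A.index ≤ p - 1 ∧
      (∀ σ : Kbar ≃ₐ[K] Kbar, ∃ k, 1 ≤ k ∧ k ≤ p - 1 ∧
        ∀ s : S, ρ σ (φ s) = (φ ^ k) (ρ σ s)) ∧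
      FiniteDimensional K (IntermediateField.fixedField A) ∧
      Module.finrank K (IntermediateField.fixedField A) ≤ p - 1 := by
  have : CharZero K := (algebraMap K ℂ).charZero
  have hconj (σ : Kbar ≃ₐ[K] Kbar) : ∃ k, 1 ≤ k ∧ k ≤ p - 1 ∧
      φ ^ k = conjSemilinear (σ := σ.toRingEquiv) (hsemi σ) φ :=
    exists_pow_eq_conjSemilinear (hsemi σ) hp φ hord hgonal hunique
  let A := (centralizer {(φ : S ≃+* S)}).comap ρ
  have hmem (σ) : σ ∈ A ↔ ∀ s : S, ρ σ (φ s) = φ (ρ σ s) := by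
    simp [A, mem_centralizer_singleton_iff, RingEquiv.ext_iff, eq_comm]
  obtain ⟨hfin, hindex⟩ : A.FiniteIndex ∧ A.index ≤ p - 1 := by
    let T := (fun k ↦ ((φ ^ k : S ≃ₐ[Kbar] S) : S ≃+* S)) '' Set.Icc 1 (p - 1)
    have hT : T.ncard ≤ p - 1 :=
      (Set.ncard_image_le (Set.finite_Icc _ _)).trans (by simp)
    refine (index_comap_centralizer_le ρ _ ((Set.finite_Icc _ _).image _) fun σ ↦ ?_).imp id
      (·.trans hT)
    obtain ⟨k, hk₁, hk₂, hk⟩ := hconj σ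
    refine ⟨k, ⟨hk₁, hk₂⟩, RingEquiv.ext fun s ↦ ?_⟩
    change (φ ^ k) s = _
    rw [hk]
    rfl
  refine ⟨A, hmem, hindex, fun σ ↦ ?_, finiteDimensional_fixedField_of_finiteIndex A,
    (finrank_fixedField_le_index A).trans hindex⟩
  obtain ⟨k, hk₁, hk₂, hk⟩ := hconj σ
  exact ⟨k, hk₁, hk₂, fun s ↦ by rw [hk, conjSemilinear_apply, RingEquiv.symm_apply_apply]⟩

/-- **Claim 1.** Let `S` be a cyclic `p`-gonal Riemann surface of genus `g ≥ 2` (given by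
its function field over the algebraic closure `K̄` of a field of definition `K ⊆ ℂ`) whose
`p`-gonal group `⟨φ⟩` is unique, presented by a curve `C` defined over `K`; the latter is
encoded by the canonical semilinear action `ρ` of `Gal(K̄/K)` on the function field `S`
(applying `σ` to the coefficients of rational functions), which satisfies
`ρ σ ∘ algebraMap K̄ S = algebraMap K̄ S ∘ σ`.  The conjugate `φ^σ` is the automorphism
`ρ σ ∘ φ ∘ (ρ σ)⁻¹`, and `φ` is defined over a subfield `L` of `K̄` iff `φ^σ = φ` for all `σ`
fixing `L`.  Then the subgroup `A = {σ : φ^σ = φ}` of `Gal(K̄/K)` has index at most `p - 1`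
(indeed `φ^σ ∈ {φ, φ², …, φ^{p-1}}` for every `σ`), and `φ` is defined over the fixed field
`K₁` of `A`, which satisfies `[K₁ : K] ≤ p - 1`. -/
theorem pGonal_automorphism_defined_over_small_extension
    (p : ℕ) (hp : p.Prime) (g : ℕ) (hg : 2 ≤ g)
    (K : Type) [Field K] [Algebra K ℂ]
    (Kbar : Type) [Field Kbar] [Algebra K Kbar] [IsAlgClosure K Kbar]
    (S : Type) [Field S] [Algebra Kbar S]
    (φ : S ≃ₐ[Kbar] S)
    (hord : orderOf φ = p)
    (hgonal : Nonempty ((IntermediateField.fixedField (Subgroup.zpowers φ)) ≃ₐ[Kbar]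
      RatFunc Kbar))
    -- `⟨φ⟩` is the unique `p`-gonal group of `S`
    (hunique : ∀ ψ : S ≃ₐ[Kbar] S, orderOf ψ = p →
      Nonempty ((IntermediateField.fixedField (Subgroup.zpowers ψ)) ≃ₐ[Kbar] RatFunc Kbar) →
      Subgroup.zpowers ψ = Subgroup.zpowers φ)
    -- `S` has genus `g`, realized by a `p`-gonal model compatible with `φ`
    (m : ℕ) (a : Fin m → Kbar) (n : Fin m → ℕ) (ζ : Kbar)
    (hζ : IsPrimitiveRoot ζ p)
    (hdata : GonalData p a n)
    (hgenus : 2 * g + 2 * p = m * (p - 1) + 2)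
    (hmodel : ∃ e : gonalFF p a n ≃ₐ[Kbar] S,
      φ (e (xFn p a n)) = e (xFn p a n) ∧
      φ (e (yFn p a n)) = algebraMap Kbar S ζ * e (yFn p a n))
    -- the canonical semilinear action of `Gal(K̄/K)` on `S` coming from the model of `S`
    -- over `K`
    (ρ : (Kbar ≃ₐ[K] Kbar) →* (S ≃+* S))
    (hsemi : ∀ (σ : Kbar ≃ₐ[K] Kbar) (c : Kbar),
      ρ σ (algebraMap Kbar S c) = algebraMap Kbar S (σ c)) :
    ∃ A : Subgroup (Kbar ≃ₐ[K] Kbar),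
      (∀ σ, σ ∈ A ↔ ∀ s : S, ρ σ (φ s) = φ (ρ σ s)) ∧
      A.index ≤ p - 1 ∧
      (∀ σ : Kbar ≃ₐ[K] Kbar, ∃ k, 1 ≤ k ∧ k ≤ p - 1 ∧
        ∀ s : S, ρ σ (φ s) = (φ ^ k) (ρ σ s)) ∧
      FiniteDimensional K (IntermediateField.fixedField A) ∧
      Module.finrank K (IntermediateField.fixedField A) ≤ p - 1 :=
  pGonal_automorphism_defined_over_small_extension_general p hp K Kbar S φ hord hgonal hunique ρ
    hsemi
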